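/- arXiv:1505.03548 — 3 statements merged into one kernel-verified Lean document; each statement's English description precedes it below -/
import Mathlib

section
/- Let f₁, f₃ be continuous functions with f₃ nonvanishing, let ω = exp(∫(f₁ - f₂²/(3f₃))dx), suppose the Abel invariant I is identically zero, and let ξ = ∫ f₃ω² dx. Then η(ξ) = 1/√(c - 2ξ) solves the normal-form equation dη/dξ = η³, so that y = ω·η(ξ) - f₂/(3f₃) solves dy/dx = f₀ + f₁y + f₂y² + f₃y³. -/
/-! The normal form `dη/dξ = η³` is separable: `d(η⁻²)/dξ = -2`, so `η = (c - 2ξ)^(-1/2)`.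
Pulling it back along `y = ω · η(ξ) - f₂/(3f₃)` is the chain rule; the choice of `ω'/ω` and
`ξ' = f₃ω²` makes the `η` terms match the cubic, and the vanishing invariant supplies exactly
the derivative of the shift `f₂/(3f₃)` needed for the remaining `η`-free terms. -/

open Real

theorem hasDerivAt_one_div_sqrt_const_sub_two_mul {c u : ℝ} (h : 0 < c - 2 * u) :
    HasDerivAt (fun u => 1 / √(c - 2 * u)) ((1 / √(c - 2 * u)) ^ 3) u := by
  have hsqrt : HasDerivAt (fun u => √(c - 2 * u)) (-2 / (2 * √(c - 2 * u))) u := by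
    simpa using (((hasDerivAt_id u).const_mul 2).const_sub c).sqrt h.ne'
  have hpos : 0 < √(c - 2 * u) := sqrt_pos.2 h
  refine ((hasDerivAt_const u (1 : ℝ)).div hsqrt hpos.ne').congr_deriv ?_
  field_simp
  rw [sq_sqrt h.le]
  ring

theorem hasDerivAt_abel_of_hasDerivAt_normal_form {f0 f1 f2 f3 ω ξ η : ℝ → ℝ} {x q : ℝ}
    (hf3 : f3 x ≠ 0)
    (hω : HasDerivAt ω ((f1 x - f2 x ^ 2 / (3 * f3 x)) * ω x) x)
    (hξ : HasDerivAt ξ (f3 x * ω x ^ 2) x)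
    (hη : HasDerivAt η (η (ξ x) ^ 3) (ξ x))
    (hq : HasDerivAt (fun x => f2 x / f3 x) q x)
    (hI : f0 x + (1/3) * q - f1 x * f2 x / (3 * f3 x) + 2 * f2 x ^ 3 / (27 * f3 x ^ 2) = 0) :
    HasDerivAt (fun x => ω x * η (ξ x) - f2 x / (3 * f3 x))
      (f0 x + f1 x * (ω x * η (ξ x) - f2 x / (3 * f3 x))
        + f2 x * (ω x * η (ξ x) - f2 x / (3 * f3 x)) ^ 2
        + f3 x * (ω x * η (ξ x) - f2 x / (3 * f3 x)) ^ 3) x := by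
  have hshift : HasDerivAt (fun x => f2 x / (3 * f3 x)) (q / 3) x := by
    have hfun : (fun x => f2 x / (3 * f3 x)) = fun x => f2 x / f3 x / 3 := by
      funext y
      rw [div_div, mul_comm]
    exact hfun ▸ hq.div_const 3
  refine ((hω.mul (hη.comp x hξ)).sub hshift).congr_deriv ?_
  have hq' : q = -3 * (f0 x - f1 x * f2 x / (3 * f3 x) + 2 * f2 x ^ 3 / (27 * f3 x ^ 2)) := by
    linarith
  rw [hq', Function.comp_apply]
  field_simp
  ring

theorem abel_null_invariant_solution_general
    (S : Set ℝ) (f0 f1 f2 f3 ω ξ : ℝ → ℝ) (c : ℝ)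
    (hf3 : ∀ x ∈ S, f3 x ≠ 0)
    (hωdiff : ∀ x ∈ S, DifferentiableAt ℝ ω x)
    (hωd : ∀ x ∈ S, deriv ω x = (f1 x - f2 x ^ 2 / (3 * f3 x)) * ω x)
    (hξ : ∀ x ∈ S, HasDerivAt ξ (f3 x * ω x ^ 2) x)
    (hquot : ∀ x ∈ S, DifferentiableAt ℝ (fun x => f2 x / f3 x) x)
    (hI : ∀ x ∈ S, f0 x + (1/3) * deriv (fun x => f2 x / f3 x) x
            - f1 x * f2 x / (3 * f3 x) + 2 * f2 x ^ 3 / (27 * f3 x ^ 2) = 0)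
    (hc : ∀ x ∈ S, 0 < c - 2 * ξ x) :
    (∀ u : ℝ, 0 < c - 2 * u →
      HasDerivAt (fun u => 1 / Real.sqrt (c - 2 * u))
        ((1 / Real.sqrt (c - 2 * u)) ^ 3) u) ∧
    (∀ x ∈ S,
      deriv (fun x => ω x * (1 / Real.sqrt (c - 2 * ξ x)) - f2 x / (3 * f3 x)) x
        = f0 x
          + f1 x * (ω x * (1 / Real.sqrt (c - 2 * ξ x)) - f2 x / (3 * f3 x))
          + f2 x * (ω x * (1 / Real.sqrt (c - 2 * ξ x)) - f2 x / (3 * f3 x)) ^ 2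
          + f3 x * (ω x * (1 / Real.sqrt (c - 2 * ξ x)) - f2 x / (3 * f3 x)) ^ 3) := by
  refine ⟨fun u hu => hasDerivAt_one_div_sqrt_const_sub_two_mul hu, fun x hx => ?_⟩
  have hω : HasDerivAt ω ((f1 x - f2 x ^ 2 / (3 * f3 x)) * ω x) x :=
    hωd x hx ▸ (hωdiff x hx).hasDerivAt
  exact (hasDerivAt_abel_of_hasDerivAt_normal_form (η := fun u => 1 / √(c - 2 * u))
    (hf3 x hx) hω (hξ x hx) (hasDerivAt_one_div_sqrt_const_sub_two_mul (hc x hx))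
    (hquot x hx).hasDerivAt (hI x hx)).deriv

theorem abel_null_invariant_solution
    (S : Set ℝ) (hS : IsOpen S) (f0 f1 f2 f3 ω ξ : ℝ → ℝ) (c : ℝ)
    (hf3 : ∀ x ∈ S, f3 x ≠ 0)
    (hωdiff : ∀ x ∈ S, DifferentiableAt ℝ ω x)
    (hωpos : ∀ x ∈ S, 0 < ω x)
    (hωd : ∀ x ∈ S, deriv ω x = (f1 x - f2 x ^ 2 / (3 * f3 x)) * ω x)
    (hξ : ∀ x ∈ S, HasDerivAt ξ (f3 x * ω x ^ 2) x)
    (hquot : ∀ x ∈ S, DifferentiableAt ℝ (fun x => f2 x / f3 x) x)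
    (hI : ∀ x ∈ S, f0 x + (1/3) * deriv (fun x => f2 x / f3 x) x
            - f1 x * f2 x / (3 * f3 x) + 2 * f2 x ^ 3 / (27 * f3 x ^ 2) = 0)
    (hc : ∀ x ∈ S, 0 < c - 2 * ξ x) :
    (∀ u : ℝ, 0 < c - 2 * u →
      HasDerivAt (fun u => 1 / Real.sqrt (c - 2 * u))
        ((1 / Real.sqrt (c - 2 * u)) ^ 3) u) ∧
    (∀ x ∈ S,
      deriv (fun x => ω x * (1 / Real.sqrt (c - 2 * ξ x)) - f2 x / (3 * f3 x)) x
        = f0 x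
          + f1 x * (ω x * (1 / Real.sqrt (c - 2 * ξ x)) - f2 x / (3 * f3 x))
          + f2 x * (ω x * (1 / Real.sqrt (c - 2 * ξ x)) - f2 x / (3 * f3 x)) ^ 2
          + f3 x * (ω x * (1 / Real.sqrt (c - 2 * ξ x)) - f2 x / (3 * f3 x)) ^ 3) :=
  abel_null_invariant_solution_general S f0 f1 f2 f3 ω ξ c hf3 hωdiff hωd hξ hquot hI hc
end

section
/- Suppose Q(x) = k·P(x) for a constant k and P is continuous with antiderivative R. If ν : I → ℝ is differentiable and satisfies ν·ν' + P + Qν = 0, then the function Ψ(x) = (1 + k·ν(x))·e^{-k(ν(x) + k·R(x))} is constant on I. -/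
/-!
Along a solution, `(1 + k ν) e^{-k(ν + k R)}` has derivative `-k² e^{-k(ν + k R)} (ν ν' + P + k P ν)`,
so the factor `-k² e^{-k(ν + k R)}` integrates the equation `ν ν' + P + k P ν = 0`: its left-hand side
times that factor is an exact derivative, which therefore vanishes. A function with zero derivative
on an open preconnected set is constant.
-/

open Real

noncomputable def abelFirstIntegral (k : ℝ) (ν R : ℝ → ℝ) (x : ℝ) : ℝ :=
  (1 + k * ν x) * exp (-k * (ν x + k * R x))

theorem hasDerivAt_abelFirstIntegral {k p ν' x : ℝ} {ν R : ℝ → ℝ}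
    (hν : HasDerivAt ν ν' x) (hR : HasDerivAt R p x) :
    HasDerivAt (abelFirstIntegral k ν R)
      (-k ^ 2 * exp (-k * (ν x + k * R x)) * (ν x * ν' + p + k * p * ν x)) x := by
  have hlin : HasDerivAt (fun y => 1 + k * ν y) (k * ν') x := (hν.const_mul k).const_add 1
  have hexp : HasDerivAt (fun y => exp (-k * (ν y + k * R y)))
      (exp (-k * (ν x + k * R x)) * (-k * (ν' + k * p))) x :=
    ((hν.add (hR.const_mul k)).const_mul (-k)).exp
  refine (hlin.mul hexp).congr_deriv ?_
  ring

theorem hasDerivAt_abelFirstIntegral_eq_zero {k p ν' x : ℝ} {ν R : ℝ → ℝ}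
    (hν : HasDerivAt ν ν' x) (hR : HasDerivAt R p x) (hode : ν x * ν' + p + k * p * ν x = 0) :
    HasDerivAt (abelFirstIntegral k ν R) 0 x := by
  simpa [hode] using hasDerivAt_abelFirstIntegral (k := k) hν hR

theorem abel_integrating_factor_first_integral
    (S : Set ℝ) (hS : IsOpen S) (hconn : IsPreconnected S)
    (P Q R ν : ℝ → ℝ) (k : ℝ)
    (hR : ∀ x ∈ S, HasDerivAt R (P x) x)
    (hQ : ∀ x ∈ S, Q x = k * P x)
    (hν : ∀ x ∈ S, DifferentiableAt ℝ ν x)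
    (hode : ∀ x ∈ S, ν x * deriv ν x + P x + Q x * ν x = 0) :
    ∃ C : ℝ, ∀ x ∈ S,
      (1 + k * ν x) * Real.exp (-k * (ν x + k * R x)) = C := by
  have hΨ : ∀ x ∈ S, HasDerivAt (abelFirstIntegral k ν R) 0 x := fun x hx =>
    hasDerivAt_abelFirstIntegral_eq_zero (hν x hx).hasDerivAt (hR x hx)
      (by rw [← hQ x hx]; exact hode x hx)
  exact hS.exists_is_const_of_deriv_eq_zero hconn
    (fun x hx => (hΨ x hx).differentiableAt.differentiableWithinAt)
    (fun x hx => (hΨ x hx).deriv)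
end

section
/- Let a, b ∈ ℝ, c ∈ ℝ, and define t(s) = c·φ₁(s) + φ₂(s) using the third-order hyperbolic functions. Let s : I → ℝ be differentiable with t(s(x)) ≠ 0 and suppose x = a·t'(s(x))/t(s(x)) + b·t''(s(x))/t(s(x)) for all x ∈ I, where bx + a² ≠ 0 and ds/dx ≠ 0 on I. Then y = ds/dx satisfies Vein's Abel equation dy/dx = (-2b/(bx+a²))y + (3(ax+b²)/(bx+a²))y² + ((x³-3abx-a³-b³)/(bx+a²))y³, and moreover b·(dx/ds) = (ax+b²) - (bx+a²)·t'(s)/t(s). -/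
/-!
With `u = t'/t` and `v = t''/t`, the relation `t''' = t` gives the Riccati system
`u' = v - u²`, `v' = 1 - u v`, so `Φ = a u + b v` has `Φ' = a (v - u²) + b (1 - u v)`.
Differentiating `Φ (s x) = x` once gives `Φ'(s) s' = 1`, and twice gives `s'' = -Φ''(s) s'³`.
Vein's equation is then a polynomial identity in `a, b, u, v` once `x = a u + b v` is substituted.
-/

open Real

noncomputable def phi1 (x : ℝ) : ℝ :=
  (1/3) * (Real.exp x + 2 * Real.exp (-x/2) * Real.cos (x * Real.sqrt 3 / 2))

noncomputable def phi2 (x : ℝ) : ℝ :=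
  (1/3) * (Real.exp x - 2 * Real.exp (-x/2) * Real.cos (x * Real.sqrt 3 / 2 + Real.pi/3))

noncomputable def phi3 (x : ℝ) : ℝ :=
  (1/3) * (Real.exp x - 2 * Real.exp (-x/2) * Real.cos (x * Real.sqrt 3 / 2 - Real.pi/3))

noncomputable def tfun (c : ℝ) (s : ℝ) : ℝ := c * phi1 s + phi2 s

open Filter Topology

/-- Since `½ cos α + (√3/2) sin α = cos (α - π/3)`, differentiation shifts the phase by `-π/3`. -/
theorem hasDerivAt_exp_mul_cos (d x : ℝ) :
    HasDerivAt (fun x => 2 * exp (-x / 2) * cos (x * √3 / 2 + d))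
      (-(2 * exp (-x / 2) * cos (x * √3 / 2 + d - π / 3))) x := by
  have harg : HasDerivAt (fun x : ℝ => x * √3 / 2 + d) (√3 / 2) x := by
    simpa using (((hasDerivAt_id x).mul_const √3).div_const 2).add_const d
  have hexp : HasDerivAt (fun x : ℝ => -x / 2) (-1 / 2) x := by
    simpa using (hasDerivAt_id x).neg.div_const 2
  refine ((((hasDerivAt_exp _).comp x hexp).const_mul 2).mul
    ((hasDerivAt_cos _).comp x harg)).congr_deriv ?_
  rw [cos_sub, cos_pi_div_three, sin_pi_div_three]
  simp only [Function.comp_def]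
  ring

theorem hasDerivAt_phi1 (x : ℝ) : HasDerivAt phi1 (phi3 x) x := by
  have h := ((hasDerivAt_exp x).add (hasDerivAt_exp_mul_cos 0 x)).const_mul (1 / 3)
  refine (h.congr_of_eventuallyEq (.of_forall fun y => ?_)).congr_deriv ?_
  · simp [phi1]
  · simp [phi3, sub_eq_add_neg]

theorem hasDerivAt_phi2 (x : ℝ) : HasDerivAt phi2 (phi1 x) x := by
  have h := ((hasDerivAt_exp x).sub (hasDerivAt_exp_mul_cos (π / 3) x)).const_mul (1 / 3)
  refine (h.congr_of_eventuallyEq (.of_forall fun y => ?_)).congr_deriv ?_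
  · simp [phi2]
  · simp [phi1]

theorem hasDerivAt_phi3 (x : ℝ) : HasDerivAt phi3 (phi2 x) x := by
  have h := ((hasDerivAt_exp x).sub (hasDerivAt_exp_mul_cos (-(π / 3)) x)).const_mul (1 / 3)
  have hcos : cos (x * √3 / 2 + -(π / 3) - π / 3) = -cos (x * √3 / 2 + π / 3) := by
    rw [← cos_sub_pi]; ring_nf
  refine (h.congr_of_eventuallyEq (.of_forall fun y => ?_)).congr_deriv ?_
  · simp [phi3, sub_eq_add_neg]
  · simp only [phi2, hcos]; ring

theorem hasDerivAt_tfun (c z : ℝ) : HasDerivAt (tfun c) (c * phi3 z + phi1 z) z :=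
  ((hasDerivAt_phi1 z).const_mul c).add (hasDerivAt_phi2 z)

theorem deriv_tfun (c : ℝ) : deriv (tfun c) = fun z => c * phi3 z + phi1 z :=
  funext fun z => (hasDerivAt_tfun c z).deriv

theorem hasDerivAt_deriv_tfun (c z : ℝ) :
    HasDerivAt (deriv (tfun c)) (c * phi2 z + phi3 z) z := by
  rw [deriv_tfun]
  exact ((hasDerivAt_phi3 z).const_mul c).add (hasDerivAt_phi1 z)

theorem deriv_deriv_tfun (c : ℝ) : deriv (deriv (tfun c)) = fun z => c * phi2 z + phi3 z :=
  funext fun z => (hasDerivAt_deriv_tfun c z).deriv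

theorem hasDerivAt_deriv_deriv_tfun (c z : ℝ) :
    HasDerivAt (deriv (deriv (tfun c))) (tfun c z) z := by
  rw [deriv_deriv_tfun]
  exact ((hasDerivAt_phi2 z).const_mul c).add (hasDerivAt_phi3 z)

section CyclicTriple

variable {T T₁ T₂ : ℝ → ℝ} {z : ℝ}

theorem hasDerivAt_first_ratio (h₀ : HasDerivAt T (T₁ z) z) (h₁ : HasDerivAt T₁ (T₂ z) z)
    (hz : T z ≠ 0) :
    HasDerivAt (fun w => T₁ w / T w) (T₂ z / T z - (T₁ z / T z) ^ 2) z :=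
  (h₁.div h₀ hz).congr_deriv (by field_simp)

theorem hasDerivAt_second_ratio (h₀ : HasDerivAt T (T₁ z) z) (h₂ : HasDerivAt T₂ (T z) z)
    (hz : T z ≠ 0) :
    HasDerivAt (fun w => T₂ w / T w) (1 - T₁ z / T z * (T₂ z / T z)) z :=
  (h₂.div h₀ hz).congr_deriv (by field_simp)

end CyclicTriple

/-- `Φ'` and `Φ''` for `Φ = a u + b v`, in terms of `u = t'/t` and `v = t''/t`. -/
def phiDeriv (a b u v : ℝ) : ℝ := a * (v - u ^ 2) + b * (1 - u * v)

def phiDeriv2 (a b u v : ℝ) : ℝ :=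
  a * (1 - 3 * u * v + 2 * u ^ 3) - b * (v ^ 2 - 2 * u ^ 2 * v + u)

section LinearComb

variable {u v : ℝ → ℝ} {z : ℝ} (a b : ℝ)

theorem hasDerivAt_linearComb_of_riccati (hu : HasDerivAt u (v z - u z ^ 2) z)
    (hv : HasDerivAt v (1 - u z * v z) z) :
    HasDerivAt (fun w => a * u w + b * v w) (phiDeriv a b (u z) (v z)) z :=
  (hu.const_mul a).add (hv.const_mul b)

theorem hasDerivAt_phiDeriv_of_riccati (hu : HasDerivAt u (v z - u z ^ 2) z)
    (hv : HasDerivAt v (1 - u z * v z) z) :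
    HasDerivAt (fun w => phiDeriv a b (u w) (v w)) (phiDeriv2 a b (u z) (v z)) z := by
  refine ((((hv.sub (hu.pow 2)).const_mul a).add
    (((hasDerivAt_const z 1).sub (hu.mul hv)).const_mul b))).congr_deriv ?_
  simp only [phiDeriv2]
  ring

end LinearComb

section LeftInverse

variable {Φ Φ' s : ℝ → ℝ} {x : ℝ}

theorem hasDerivAt_mul_deriv_eq_one_of_leftInverse {φ : ℝ} (hΦ : HasDerivAt Φ φ (s x))
    (hs : DifferentiableAt ℝ s x) (h : ∀ᶠ w in 𝓝 x, Φ (s w) = w) : φ * deriv s x = 1 :=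
  (hΦ.comp x hs.hasDerivAt).unique ((hasDerivAt_id x).congr_of_eventuallyEq h)

theorem deriv_deriv_of_leftInverse {Φ'' : ℝ} (hΦ : ∀ᶠ w in 𝓝 x, HasDerivAt Φ (Φ' (s w)) (s w))
    (hs : ∀ᶠ w in 𝓝 x, DifferentiableAt ℝ s w) (hΦ' : HasDerivAt Φ' Φ'' (s x))
    (hs' : DifferentiableAt ℝ (deriv s) x) (h : ∀ᶠ w in 𝓝 x, Φ (s w) = w) :
    Φ'' * deriv s x ^ 2 + Φ' (s x) * deriv (deriv s) x = 0 := by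
  have hone : ∀ᶠ w in 𝓝 x, Φ' (s w) * deriv s w = 1 := by
    filter_upwards [hΦ, hs, h.eventually_nhds] with w hΦw hsw hw
    exact hasDerivAt_mul_deriv_eq_one_of_leftInverse hΦw hsw hw
  have hprod := (hΦ'.comp x hs.self_of_nhds.hasDerivAt).mul hs'.hasDerivAt
  have hzero := hprod.unique ((hasDerivAt_const x (1 : ℝ)).congr_of_eventuallyEq hone)
  rw [← hzero, Function.comp_apply]
  ring

end LeftInverse

theorem vein_abel_of_phiDeriv {a b u v x y y₂ : ℝ} (hx : x = a * u + b * v)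
    (h₁ : phiDeriv a b u v * y = 1) (h₂ : phiDeriv2 a b u v * y ^ 2 + phiDeriv a b u v * y₂ = 0)
    (hden : b * x + a ^ 2 ≠ 0) :
    y₂ = (-2 * b / (b * x + a ^ 2)) * y + (3 * (a * x + b ^ 2) / (b * x + a ^ 2)) * y ^ 2
      + ((x ^ 3 - 3 * a * b * x - a ^ 3 - b ^ 3) / (b * x + a ^ 2)) * y ^ 3 := by
  suffices (b * x + a ^ 2) * y₂
      = -2 * b * y + 3 * (a * x + b ^ 2) * y ^ 2 + (x ^ 3 - 3 * a * b * x - a ^ 3 - b ^ 3) * y ^ 3 by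
    field_simp
    linear_combination this
  subst hx
  simp only [phiDeriv, phiDeriv2] at h₁ h₂
  linear_combination (b * (a * u + b * v) + a ^ 2) * (y * h₂ - y₂ * h₁)
    + (-2 * b * y * ((a * (v - u ^ 2) + b * (1 - u * v)) * y + 1)
      + 3 * (a * (a * u + b * v) + b ^ 2) * y ^ 2) * h₁

theorem mul_phiDeriv_eq (a b u v : ℝ) :
    b * phiDeriv a b u v = (a * (a * u + b * v) + b ^ 2) - (b * (a * u + b * v) + a ^ 2) * u := by
  unfold phiDeriv
  ring

theorem vein_parametric_solution_general
    (a b c : ℝ) (S : Set ℝ) (hS : IsOpen S) (s : ℝ → ℝ)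
    (hs : ∀ x ∈ S, DifferentiableAt ℝ s x)
    (hs2 : ∀ x ∈ S, DifferentiableAt ℝ (deriv s) x)
    (ht : ∀ x ∈ S, tfun c (s x) ≠ 0)
    (himp : ∀ x ∈ S,
      x = a * deriv (tfun c) (s x) / tfun c (s x)
        + b * deriv (deriv (tfun c)) (s x) / tfun c (s x))
    (hden : ∀ x ∈ S, b * x + a ^ 2 ≠ 0) :
    ∀ x ∈ S,
      (deriv (deriv s) x
        = (-2 * b / (b * x + a ^ 2)) * deriv s x
          + (3 * (a * x + b ^ 2) / (b * x + a ^ 2)) * (deriv s x) ^ 2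
          + ((x ^ 3 - 3 * a * b * x - a ^ 3 - b ^ 3) / (b * x + a ^ 2)) * (deriv s x) ^ 3)
      ∧ b * (1 / deriv s x)
          = (a * x + b ^ 2) - (b * x + a ^ 2) * (deriv (tfun c) (s x) / tfun c (s x)) := by
  intro x hx
  set u := fun z => deriv (tfun c) z / tfun c z
  set v := fun z => deriv (deriv (tfun c)) z / tfun c z
  have hT := fun z => (hasDerivAt_tfun c z).differentiableAt.hasDerivAt
  have hT₁ := fun z => (hasDerivAt_deriv_tfun c z).differentiableAt.hasDerivAt
  have hu : ∀ w ∈ S, HasDerivAt u (v (s w) - u (s w) ^ 2) (s w) := fun w hw =>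
    hasDerivAt_first_ratio (hT _) (hT₁ _) (ht w hw)
  have hv : ∀ w ∈ S, HasDerivAt v (1 - u (s w) * v (s w)) (s w) := fun w hw =>
    hasDerivAt_second_ratio (hT _) (hasDerivAt_deriv_deriv_tfun c _) (ht w hw)
  have hxS : ∀ᶠ w in 𝓝 x, w ∈ S := hS.mem_nhds hx
  have hinv : ∀ᶠ w in 𝓝 x, a * u (s w) + b * v (s w) = w := by
    filter_upwards [hxS] with w hw
    simpa only [mul_div_assoc] using (himp w hw).symm
  have h₁ : phiDeriv a b (u (s x)) (v (s x)) * deriv s x = 1 :=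
    hasDerivAt_mul_deriv_eq_one_of_leftInverse
      (hasDerivAt_linearComb_of_riccati a b (hu x hx) (hv x hx)) (hs x hx) hinv
  have h₂ := deriv_deriv_of_leftInverse (Φ' := fun z => phiDeriv a b (u z) (v z))
    (hxS.mono fun w hw => hasDerivAt_linearComb_of_riccati a b (hu w hw) (hv w hw))
    (hxS.mono hs) (hasDerivAt_phiDeriv_of_riccati a b (hu x hx) (hv x hx)) (hs2 x hx) hinv
  have hx_eq : x = a * u (s x) + b * v (s x) := hinv.self_of_nhds.symm
  refine ⟨vein_abel_of_phiDeriv hx_eq h₁ h₂ (hden x hx), ?_⟩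
  rw [one_div, ← eq_inv_of_mul_eq_one_left h₁, mul_phiDeriv_eq, ← hx_eq]

theorem vein_parametric_solution
    (a b c : ℝ) (S : Set ℝ) (hS : IsOpen S) (s : ℝ → ℝ)
    (hs : ∀ x ∈ S, DifferentiableAt ℝ s x)
    (hs2 : ∀ x ∈ S, DifferentiableAt ℝ (deriv s) x)
    (ht : ∀ x ∈ S, tfun c (s x) ≠ 0)
    (himp : ∀ x ∈ S,
      x = a * deriv (tfun c) (s x) / tfun c (s x)
        + b * deriv (deriv (tfun c)) (s x) / tfun c (s x))
    (hden : ∀ x ∈ S, b * x + a ^ 2 ≠ 0)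
    (hds : ∀ x ∈ S, deriv s x ≠ 0) :
    ∀ x ∈ S,
      (deriv (deriv s) x
        = (-2 * b / (b * x + a ^ 2)) * deriv s x
          + (3 * (a * x + b ^ 2) / (b * x + a ^ 2)) * (deriv s x) ^ 2
          + ((x ^ 3 - 3 * a * b * x - a ^ 3 - b ^ 3) / (b * x + a ^ 2)) * (deriv s x) ^ 3)
      ∧ b * (1 / deriv s x)
          = (a * x + b ^ 2) - (b * x + a ^ 2) * (deriv (tfun c) (s x) / tfun c (s x)) :=
  vein_parametric_solution_general a b c S hS s hs hs2 ht himp hden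
end
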